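/- arXiv:1312.7514 — 3 statements merged into one kernel-verified Lean document; each statement's English description precedes it below -/
import Mathlib

section
/- For every finite rooted tree T there exist a finite fan S and an epimorphism φ : S → T; that is, the family of finite fans is coinitial in the family of finite rooted trees. -/
/-- A finite rooted tree: a finite partial order with a least element (the root) in which
the set of predecessors of any element is linearly ordered. -/
structure FiniteRootedTree where
  carrier : Type
  [fintype : Fintype carrier]
  [po : PartialOrder carrier]
  [bot : OrderBot carrier]
  chains : ∀ t : carrier, IsChain (· ≤ ·) {s | s ≤ t}

attribute [instance] FiniteRootedTree.fintype FiniteRootedTree.po FiniteRootedTree.bot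

/-- `R^T(s,t)` iff `s = t` or `t` is an immediate successor of `s` (i.e. `t` covers `s`). -/
def FiniteRootedTree.R (T : FiniteRootedTree) (s t : T.carrier) : Prop := s = t ∨ s ⋖ t

/-- An epimorphism between finite rooted trees: a surjection that preserves the
relation `R` and lifts related pairs. -/
def IsTreeEpi (S T : FiniteRootedTree) (φ : S.carrier → T.carrier) : Prop :=
  Function.Surjective φ ∧
  (∀ s s' : S.carrier, S.R s s' → T.R (φ s) (φ s')) ∧
  (∀ t t' : T.carrier, T.R t t' → ∃ s s' : S.carrier, φ s = t ∧ φ s' = t' ∧ S.R s s')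

/-- A fan: a finite rooted tree in which any common `R`-predecessor of two incomparable
points (other than the points themselves) is the root, and all branches (maximal chains)
have the same number of elements. -/
def IsFan (T : FiniteRootedTree) : Prop :=
  (∀ s t p : T.carrier, ¬ s ≤ t → ¬ t ≤ s → p ≠ s → p ≠ t → T.R p s → T.R p t → p = ⊥) ∧
  (∀ b₁ b₂ : Set T.carrier, IsMaxChain (· ≤ ·) b₁ → IsMaxChain (· ≤ ·) b₂ →
    b₁.ncard = b₂.ncard)

/-! Glue at the root one chain of length `|T|` for every point `m` of `T`; this is a fan, as it
branches only at the root and all its branches have `|T| + 1` points. Send the point of height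
`k` on the branch of `m` to the ancestor of `m` at height `min k (height m)`: going up the branch
walks up the chain from the root to `m` one step at a time and then stays at `m`. So consecutive
points go to `R`-related points, and a covering `t ⋖ m` is the image of a consecutive pair on the
branch of `m`. -/

open Set

theorem Sigma.mk_covBy_mk_iff {ι : Type*} {α : ι → Type*} [∀ i, Preorder (α i)] {i : ι}
    {a b : α i} : (⟨i, a⟩ : Σ i, α i) ⋖ ⟨i, b⟩ ↔ a ⋖ b := by
  refine ⟨fun h ↦ ⟨mk_lt_mk_iff.1 h.1, fun c hac hcb ↦ h.2 (mk_lt_mk_iff.2 hac)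
    (mk_lt_mk_iff.2 hcb)⟩, fun h ↦ ⟨mk_lt_mk_iff.2 h.1, fun ⟨j, c⟩ hac hcb ↦ ?_⟩⟩
  obtain ⟨_, _, _, hac⟩ := hac
  exact h.2 hac (mk_lt_mk_iff.1 hcb)

theorem Set.OrdConnected.coe_wcovBy_coe {α : Type*} [Preorder α] {s : Set α} (hs : s.OrdConnected)
    {x y : s} : (x : α) ⩿ y ↔ x ⩿ y :=
  OrdConnected.apply_wcovBy_apply_iff (OrderEmbedding.subtype (· ∈ s)) (by simpa using hs)

theorem Set.OrdConnected.coe_covBy_coe {α : Type*} [Preorder α] {s : Set α} (hs : s.OrdConnected)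
    {x y : s} : (x : α) ⋖ y ↔ x ⋖ y :=
  OrdConnected.apply_covBy_apply_iff (OrderEmbedding.subtype (· ∈ s)) (by simpa using hs)

theorem Fin.clamp_wcovBy_clamp_succ (k n : ℕ) : Fin.clamp k n ⩿ Fin.clamp (k + 1) n := by
  rcases lt_or_ge k n with h | h
  · exact (Fin.covBy_iff.2 (Nat.covBy_iff_add_one_eq.2 (by simp [Fin.coe_clamp]; omega))).wcovBy
  · exact (Fin.ext (by simp [Fin.coe_clamp]; omega) : Fin.clamp k n = _).wcovBy

/-- The root `⊥` with a copy of the chain `Fin L` above it for each `i : ι`; the point `pt i a`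
has height `a + 1`. -/
abbrev Fan (ι : Type) (L : ℕ) : Type := WithBot (Σ _ : ι, Fin L)

namespace Fan

variable {ι : Type} {L : ℕ}

def pt (i : ι) (a : Fin L) : Fan ι L := ↑(⟨i, a⟩ : Σ _ : ι, Fin L)

lemma pt_le_pt_iff {i j : ι} {a b : Fin L} : pt i a ≤ pt j b ↔ i = j ∧ a ≤ b := by
  refine ⟨fun h ↦ ?_, fun ⟨hij, hab⟩ ↦ hij ▸ WithBot.coe_le_coe.2 (Sigma.mk_le_mk_iff.2 hab)⟩
  obtain ⟨_, _, _, hab⟩ := WithBot.coe_le_coe.1 h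
  exact ⟨rfl, hab⟩

lemma bot_covBy_pt_iff {i : ι} {a : Fin L} : ⊥ ⋖ pt i a ↔ (a : ℕ) = 0 := by
  rw [pt, WithBot.bot_covBy_coe, isMin_iff_forall_not_lt]
  refine ⟨fun h ↦ ?_, fun h ⟨j, b⟩ hb ↦ ?_⟩
  · by_contra ha
    exact h ⟨i, ⟨0, by omega⟩⟩ (Sigma.mk_lt_mk_iff.2 (Fin.lt_def.2 (by simp; omega)))
  · obtain ⟨_, _, _, hb⟩ := hb
    exact absurd (Fin.lt_def.1 hb) (by simp [h])

lemma pt_covBy_pt_iff {i j : ι} {a b : Fin L} :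
    pt i a ⋖ pt j b ↔ i = j ∧ (a : ℕ) + 1 = b := by
  rw [pt, pt, WithBot.coe_covBy_coe]
  constructor
  · intro h
    obtain ⟨_, _, _, -⟩ := h.1
    exact ⟨rfl, by simpa using Sigma.mk_covBy_mk_iff.1 h⟩
  · rintro ⟨rfl, h⟩
    exact Sigma.mk_covBy_mk_iff.2 (by simpa using h)

def branch (i : ι) : Set (Fan ι L) := insert ⊥ (range (pt i))

lemma isChain_branch (i : ι) : IsChain (· ≤ ·) (branch (L := L) i) :=
  (Monotone.isChain_range fun _ _ hab ↦ pt_le_pt_iff.2 ⟨rfl, hab⟩).insert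
    fun _ _ _ ↦ .inl bot_le

lemma ncard_branch (i : ι) : (branch (L := L) i).ncard = L + 1 := by
  rw [branch, ncard_insert_of_notMem (by simp [pt]), ncard_range_of_injective, Nat.card_fin]
  intro a b h
  simpa [pt] using h

lemma mem_branch_of_le_or_ge {i : ι} {a : Fin L} {x : Fan ι L} (hx : x ≤ pt i a ∨ pt i a ≤ x) :
    x ∈ branch i := by
  induction x using WithBot.recBotCoe with
  | bot => exact mem_insert _ _
  | coe y =>
    obtain ⟨j, b⟩ := y
    obtain rfl : j = i := by
      rcases hx with h | h
      · exact (pt_le_pt_iff.1 h).1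
      · exact (pt_le_pt_iff.1 h).1.symm
    exact mem_insert_of_mem _ ⟨b, rfl⟩

lemma exists_subset_branch [Nonempty ι] {b : Set (Fan ι L)} (hb : IsChain (· ≤ ·) b) :
    ∃ i, b ⊆ branch i := by
  by_cases h : ∃ i a, pt i a ∈ b
  · obtain ⟨i, a, hia⟩ := h
    refine ⟨i, fun x hx ↦ mem_branch_of_le_or_ge (a := a) ?_⟩
    obtain rfl | hne := eq_or_ne x (pt i a)
    · exact .inl le_rfl
    · exact hb hx hia hne
  · refine ⟨Classical.arbitrary ι, fun x hx ↦ ?_⟩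
    induction x using WithBot.recBotCoe with
    | bot => exact mem_insert _ _
    | coe y => exact (h ⟨y.1, y.2, hx⟩).elim

def tree (ι : Type) [Fintype ι] (L : ℕ) : FiniteRootedTree where
  carrier := Fan ι L
  chains x := by
    induction x using WithBot.recBotCoe with
    | bot => exact fun y hy z _ _ ↦ .inl ((le_bot_iff.1 hy).trans_le bot_le)
    | coe y =>
      exact (isChain_branch y.1).mono fun z hz ↦ mem_branch_of_le_or_ge (a := y.2) (.inl hz)

lemma ncard_of_isMaxChain [Nonempty ι] {b : Set (Fan ι L)} (hb : IsMaxChain (· ≤ ·) b) :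
    b.ncard = L + 1 := by
  obtain ⟨i, hi⟩ := exists_subset_branch hb.1
  rw [hb.2 (isChain_branch i) hi, ncard_branch]

theorem isFan_tree [Fintype ι] [Nonempty ι] : IsFan (tree ι L) := by
  refine ⟨fun s t p hst hts hps hpt hs ht ↦ ?_, fun b₁ b₂ hb₁ hb₂ ↦ ?_⟩
  · induction p using WithBot.recBotCoe with
    | bot => rfl
    | coe p =>
      have hs' : pt p.1 p.2 ≤ s := (hs.resolve_left hps).le
      have ht' : pt p.1 p.2 ≤ t := (ht.resolve_left hpt).le
      exact (((isChain_branch p.1).total (mem_branch_of_le_or_ge (.inr hs'))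
        (mem_branch_of_le_or_ge (.inr ht'))).elim hst hts).elim
  · exact (ncard_of_isMaxChain hb₁).trans (ncard_of_isMaxChain hb₂).symm

def map {α : Type*} [Bot α] (p : ι → ℕ → α) : Fan ι L → α
  | ⊥ => ⊥
  | (x : Σ _ : ι, Fin L) => p x.1 (x.2 + 1)

section Map

variable {α : Type*} [PartialOrder α] [OrderBot α] {p : ι → ℕ → α}

lemma map_wcovBy_map_of_covBy (hp0 : ∀ i, p i 0 = ⊥) (hstep : ∀ i k, p i k ⩿ p i (k + 1))
    {x y : Fan ι L} (hxy : x ⋖ y) : map p x ⩿ map p y := by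
  induction y using WithBot.recBotCoe with
  | bot => exact (not_lt_bot hxy.lt).elim
  | coe y =>
    obtain ⟨i, b⟩ := y
    induction x using WithBot.recBotCoe with
    | bot =>
      have hb : (b : ℕ) = 0 := bot_covBy_pt_iff.1 hxy
      simpa [map, hb, hp0] using hstep i 0
    | coe x =>
      obtain ⟨rfl, hab⟩ := pt_covBy_pt_iff.1 hxy
      simpa [map, ← hab] using hstep x.1 (x.2 + 1)

lemma exists_map_eq (hp0 : ∀ i, p i 0 = ⊥) {i : ι} {k : ℕ} (hk : k ≤ L) :
    ∃ x : Fan ι L, map p x = p i k := by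
  cases k with
  | zero => exact ⟨⊥, (hp0 i).symm⟩
  | succ k => exact ⟨pt i ⟨k, hk⟩, rfl⟩

lemma exists_covBy_map_eq (hp0 : ∀ i, p i 0 = ⊥) {i : ι} {k : ℕ} (hk : k < L) :
    ∃ x y : Fan ι L, map p x = p i k ∧ map p y = p i (k + 1) ∧ x ⋖ y := by
  cases k with
  | zero => exact ⟨⊥, pt i ⟨0, hk⟩, (hp0 i).symm, rfl, bot_covBy_pt_iff.2 rfl⟩
  | succ k => exact ⟨pt i ⟨k, by omega⟩, pt i ⟨k + 1, hk⟩, rfl, rfl, pt_covBy_pt_iff.2 ⟨rfl, rfl⟩⟩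

end Map

theorem isTreeEpi_map [Fintype ι] (T : FiniteRootedTree) (p : ι → ℕ → T.carrier)
    (hp0 : ∀ i, p i 0 = ⊥) (hstep : ∀ i k, p i k ⩿ p i (k + 1))
    (hsurj : ∀ t, ∃ i, ∃ k ≤ L, p i k = t)
    (hlift : ∀ t t', t ⋖ t' → ∃ i, ∃ k < L, p i k = t ∧ p i (k + 1) = t') :
    IsTreeEpi (tree ι L) T (map p) := by
  have surj : Function.Surjective (map (L := L) p) := fun t ↦ by
    obtain ⟨i, k, hk, rfl⟩ := hsurj t
    exact exists_map_eq hp0 hk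
  refine ⟨surj, fun s s' h ↦ ?_, fun t t' h ↦ ?_⟩
  · rcases h with rfl | h
    · exact .inl rfl
    · exact wcovBy_iff_eq_or_covBy.1 (map_wcovBy_map_of_covBy hp0 hstep h)
  · rcases h with rfl | h
    · obtain ⟨s, rfl⟩ := surj t
      exact ⟨s, s, rfl, rfl, .inl rfl⟩
    · obtain ⟨i, k, hk, rfl, rfl⟩ := hlift t t' h
      obtain ⟨x, y, hx, hy, hxy⟩ := exists_covBy_map_eq hp0 hk
      exact ⟨x, y, hx, hy, .inr hxy⟩

end Fan

namespace FiniteRootedTree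

variable (T : FiniteRootedTree)

noncomputable instance (m : T.carrier) : LinearOrder (Iic m) := by
  classical exact (T.chains m).linearOrder

noncomputable instance (m : T.carrier) : Fintype (Iic m) := Fintype.ofFinite _

noncomputable def height (m : T.carrier) : ℕ := Fintype.card (Iic m) - 1

noncomputable def chainIso (m : T.carrier) : Fin (T.height m + 1) ≃o Iic m :=
  monoEquivOfFin _ (Nat.sub_add_cancel (Fintype.card_pos_iff.2 ⟨⊥⟩)).symm

noncomputable def path (m : T.carrier) (k : ℕ) : T.carrier :=
  T.chainIso m (Fin.clamp k (T.height m))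

lemma height_lt_card (m : T.carrier) : T.height m < Fintype.card T.carrier :=
  calc T.height m < Fintype.card (Iic m) := Nat.sub_lt (Fintype.card_pos_iff.2 ⟨⊥⟩) one_pos
    _ ≤ _ := Fintype.card_le_of_injective _ Subtype.val_injective

lemma path_zero (m : T.carrier) : T.path m 0 = ⊥ := by
  rw [path, show Fin.clamp 0 (T.height m) = ⊥ from Fin.ext (by simp [Fin.coe_clamp]; rfl),
    OrderIso.map_bot, Iic.coe_bot]

lemma path_height (m : T.carrier) : T.path m (T.height m) = m := by
  rw [path, show Fin.clamp _ _ = ⊤ from Fin.ext (by simp [Fin.coe_clamp]), OrderIso.map_top,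
    Iic.coe_top]

lemma path_wcovBy_path_succ (m : T.carrier) (k : ℕ) : T.path m k ⩿ T.path m (k + 1) :=
  ordConnected_Iic.coe_wcovBy_coe.2 <|
    (apply_wcovBy_apply_iff (T.chainIso m)).2 (Fin.clamp_wcovBy_clamp_succ k _)

lemma exists_path_eq_of_covBy {t m : T.carrier} (h : t ⋖ m) :
    ∃ k < T.height m, T.path m k = t ∧ T.path m (k + 1) = m := by
  set k := (T.chainIso m).symm ⟨t, h.le⟩
  have hk : (k : ℕ) + 1 = T.height m := by
    have : (⟨t, h.le⟩ : Iic m) ⋖ ⊤ := ordConnected_Iic.coe_covBy_coe.1 h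
    have hk := (apply_covBy_apply_iff (T.chainIso m).symm).2 this
    rwa [OrderIso.map_top, Fin.top_eq_last, Fin.covBy_iff, Nat.covBy_iff_add_one_eq,
      Fin.val_last] at hk
  refine ⟨k, by omega, ?_, by rw [hk, path_height]⟩
  rw [path, show Fin.clamp k (T.height m) = k from Fin.ext (by simp [Fin.coe_clamp]; omega),
    OrderIso.apply_symm_apply]

end FiniteRootedTree

/-- The family of finite fans is coinitial in the family of finite rooted trees:
every finite rooted tree is an epimorphic image of a finite fan. -/
theorem fans_coinitial (T : FiniteRootedTree) :
    ∃ (S : FiniteRootedTree) (φ : S.carrier → T.carrier),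
      IsFan S ∧ IsTreeEpi S T φ := by
  have : Nonempty T.carrier := ⟨⊥⟩
  refine ⟨Fan.tree T.carrier (Fintype.card T.carrier), Fan.map T.path, Fan.isFan_tree,
    Fan.isTreeEpi_map T T.path T.path_zero T.path_wcovBy_path_succ
      (fun t ↦ ⟨t, T.height t, (T.height_lt_card t).le, T.path_height t⟩) fun t t' h ↦ ?_⟩
  obtain ⟨k, hk, hkt, hkt'⟩ := T.exists_path_eq_of_covBy h
  exact ⟨t', k, hk.trans (T.height_lt_card t'), hkt, hkt'⟩
end

section
/- Let L be a Lelek fan and let X be a smooth fan. Then there exists a continuous surjection f : L → X that is monotone on segments. In particular, every smooth fan is a continuous image of the Lelek fan. -/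
/-- The equivalence relation on `(ℕ → Bool) × [0,1]` identifying two points iff they are
equal or both have second coordinate `0`. -/
def CantorFanSetoid : Setoid ((ℕ → Bool) × unitInterval) where
  r p q := p = q ∨ (p.2 = 0 ∧ q.2 = 0)
  iseqv := by
    constructor
    · intro p; exact Or.inl rfl
    · rintro p q (h | h)
      · exact Or.inl h.symm
      · exact Or.inr ⟨h.2, h.1⟩
    · rintro p q r (h | h) (h' | h')
      · exact Or.inl (h.trans h')
      · exact Or.inr ⟨by rw [h]; exact h'.1, h'.2⟩
      · exact Or.inr ⟨h.1, by rw [← h']; exact h.2⟩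
      · exact Or.inr ⟨h.1, h'.2⟩

/-- The Cantor fan: the cone over the Cantor set `{0,1}^ℕ`, i.e. the quotient of
`{0,1}^ℕ × [0,1]` collapsing `{0,1}^ℕ × {0}` to a point. -/
def CantorFan : Type := Quotient CantorFanSetoid

instance : TopologicalSpace CantorFan := instTopologicalSpaceQuotient

/-- The top `v` of the Cantor fan. -/
def fanTop : CantorFan := Quotient.mk CantorFanSetoid (fun _ => false, 0)

/-- `e` is an endpoint of `X ⊆ CantorFan` if `e ∈ X` and for every arc contained in `X`
and containing `e`, the point `e` is an endpoint of that arc. -/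
def IsEndpoint (X : Set CantorFan) (e : CantorFan) : Prop :=
  e ∈ X ∧ ∀ h : unitInterval → CantorFan, Topology.IsEmbedding h →
    Set.range h ⊆ X → e ∈ Set.range h → e = h 0 ∨ e = h 1

/-- A Lelek fan: a nondegenerate subcontinuum of the Cantor fan whose set of endpoints
is dense in it. -/
def IsLelekFan (L : Set CantorFan) : Prop :=
  L.Nontrivial ∧ IsCompact L ∧ IsConnected L ∧ L ⊆ closure {e | IsEndpoint L e}

/-- The segment `[v,x]` in the Cantor fan: if `x` is the class of `(c,t)`, it consists of
the classes of `(c,s)` for `0 ≤ s ≤ t`. -/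
def fanSegment (x : CantorFan) : Set CantorFan :=
  {y | ∃ (c : ℕ → Bool) (t : unitInterval), Quotient.mk CantorFanSetoid (c, t) = x ∧
    ∃ s : unitInterval, s ≤ t ∧ y = Quotient.mk CantorFanSetoid (c, s)}

/-- A smooth fan: a nondegenerate subcontinuum of the Cantor fan that is not
homeomorphic to the unit interval. -/
def IsSmoothFan (X : Set CantorFan) : Prop :=
  X.Nontrivial ∧ IsCompact X ∧ IsConnected X ∧ ¬ Nonempty (↥X ≃ₜ ↥unitInterval)

/-- A map `f : L → X` is monotone on segments if `f(v) = v` and the image of a point of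
the segment `[v,y]` lies on the segment `[v,f(y)]`. -/
def MonotoneOnSegments (L X : Set CantorFan) (f : ↥L → ↥X) : Prop :=
  (∀ hv : fanTop ∈ L, (f ⟨fanTop, hv⟩ : CantorFan) = fanTop) ∧
  ∀ x y : ↥L, (x : CantorFan) ∈ fanSegment ↑y → (f x : CantorFan) ∈ fanSegment ↑(f y)

/-!
A subcontinuum of the Cantor fan that misses the top `v` lies on a single leg (two legs are
separated by the continuous height on a clopen set of legs), hence is an arc; so a smooth fan,
and a Lelek fan with its dense endpoints, both contain `v`. A subcontinuum containing `v` is a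
union of segments `[v, x]`: the height on a clopen set of legs maps it onto an interval
containing `0`.

Interior points of a segment are not endpoints, so in a Lelek fan `L` the legs reaching above a
level `δ > 0` form a preperfect set, whose closure `P` is a nonempty perfect subset of the Cantor
set. Through a Cantor set inside `P`, a retraction onto it and the Hausdorff–Alexandroff theorem,
a continuous `φ` maps `P` onto the compact set `{(c, t) | [c, t] ∈ X}`. The map
`[c, t] ↦ [(φ c).1, min (t / δ) (φ c).2]` stretches each leg of `L` onto the segment
`[v, [φ c]]` of `X` and sends `[c, δ]` to `[φ c]`.
-/

open Set Function Topology unitInterval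

theorem Perfect.exists_continuous_surjOn {P : Set (ℕ → Bool)} (hP : Perfect P)
    (hne : P.Nonempty) (Y : Type*) [TopologicalSpace Y] [CompactSpace Y]
    [TopologicalSpace.MetrizableSpace Y] [Nonempty Y] :
    ∃ g : (ℕ → Bool) → Y, Continuous g ∧ SurjOn g P univ := by
  obtain ⟨g, hg, hgs⟩ :=
    let := TopologicalSpace.metrizableSpaceMetric Y
    exists_nat_bool_continuous_surjective_of_compact Y
  obtain ⟨ι, hιP, hι, hιinj⟩ :
      ∃ ι : (ℕ → Bool) → (ℕ → Bool), range ι ⊆ P ∧ Continuous ι ∧ Injective ι :=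
    let := TopologicalSpace.upgradeIsCompletelyMetrizable (ℕ → Bool)
    hP.exists_nat_bool_injection hne
  have hιe : IsEmbedding ι := (hι.isClosedEmbedding hιinj).isEmbedding
  obtain ⟨r, hr, hrι, hrange⟩ : ∃ r : (ℕ → Bool) → (ℕ → Bool), Continuous r ∧
      (∀ x ∈ range ι, r x = x) ∧ range r = range ι := by
    let := PiNat.metricSpace (E := fun _ : ℕ => Bool)
    obtain ⟨r, hrι, hrange, hr⟩ := PiNat.exists_lipschitz_retraction_of_isClosed
      (hι.isClosedEmbedding hιinj).isClosed_range (range_nonempty ι)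
    exact ⟨r, hr.continuous, hrι, hrange⟩
  refine ⟨g ∘ hιe.toHomeomorph.symm ∘ codRestrict r _ (hrange ▸ mem_range_self),
    by fun_prop, fun y _ => ?_⟩
  obtain ⟨x, rfl⟩ := hgs y
  refine ⟨ι x, hιP (mem_range_self x), ?_⟩
  have hx : codRestrict r _ (hrange ▸ mem_range_self) (ι x) = ⟨ι x, mem_range_self x⟩ :=
    Subtype.ext (hrι _ (mem_range_self x))
  simp [hx]

namespace CantorFan

def mk (c : ℕ → Bool) (t : I) : CantorFan := Quotient.mk CantorFanSetoid (c, t)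

theorem exists_eq_mk (z : CantorFan) : ∃ c t, z = mk c t := by
  obtain ⟨⟨c, t⟩, rfl⟩ := Quotient.exists_rep z
  exact ⟨c, t, rfl⟩

theorem mk_eq_mk {c d : ℕ → Bool} {s t : I} :
    mk c s = mk d t ↔ (c = d ∧ s = t) ∨ (s = 0 ∧ t = 0) :=
  (Quotient.eq (r := CantorFanSetoid)).trans (or_congr_left Prod.ext_iff)

@[simp]
theorem mk_eq_fanTop {c : ℕ → Bool} {t : I} : mk c t = fanTop ↔ t = 0 := by
  rw [fanTop, ← mk, mk_eq_mk]
  simp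

@[simp]
theorem mk_zero (c : ℕ → Bool) : mk c 0 = fanTop := mk_eq_fanTop.2 rfl

theorem mk_injective (c : ℕ → Bool) : Injective (mk c) := fun s t h => by
  rcases mk_eq_mk.1 h with h | h
  exacts [h.2, h.1.trans h.2.symm]

@[fun_prop]
theorem continuous_mk_uncurry : Continuous (fun p : (ℕ → Bool) × I => mk p.1 p.2) :=
  continuous_quotient_mk'

@[fun_prop]
theorem continuous_mk (c : ℕ → Bool) : Continuous (mk c) := by fun_prop

def lift {β : Type*} (g : (ℕ → Bool) → I → β) (hg : ∀ c d, g c 0 = g d 0) : CantorFan → β :=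
  Quotient.lift (fun p => g p.1 p.2) <| by
    rintro ⟨c, s⟩ ⟨d, t⟩ (h | ⟨hs, ht⟩)
    · rw [h]
    · simp only at hs ht
      rw [hs, ht]; exact hg c d

@[simp]
theorem lift_mk {β : Type*} (g : (ℕ → Bool) → I → β) (hg) (c : ℕ → Bool) (t : I) :
    lift g hg (mk c t) = g c t := rfl

theorem continuous_lift {β : Type*} [TopologicalSpace β] {g : (ℕ → Bool) → I → β} (hg)
    (hgc : Continuous fun p : (ℕ → Bool) × I => g p.1 p.2) : Continuous (lift g hg) :=
  hgc.quotient_lift _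

open scoped Classical in
noncomputable def heightOn (U : Set (ℕ → Bool)) : CantorFan → I :=
  lift (fun c t => if c ∈ U then t else 0) fun c d => by simp

def height : CantorFan → I := lift (fun _ t => t) fun _ _ => rfl

@[simp]
theorem height_mk (c : ℕ → Bool) (t : I) : height (mk c t) = t := rfl

theorem heightOn_mk_of_mem {U : Set (ℕ → Bool)} {c : ℕ → Bool} (hc : c ∈ U) (t : I) :
    heightOn U (mk c t) = t := by
  simp [heightOn, hc]

@[fun_prop]
theorem continuous_height : Continuous height :=
  continuous_lift _ continuous_snd

theorem continuous_heightOn {U : Set (ℕ → Bool)} (hU : IsClopen U) : Continuous (heightOn U) := by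
  classical
  have : frontier {p : (ℕ → Bool) × I | p.1 ∈ U} = ∅ := (hU.preimage continuous_fst).frontier_eq
  exact continuous_lift _ (Continuous.if (by simp [this]) continuous_snd continuous_const)

instance : T2Space CantorFan := by
  refine .of_injective_continuous (f := fun z => (height z, fun n => heightOn {c | c n} z))
    (fun z w h => ?_) (continuous_height.prodMk (continuous_pi fun n =>
      continuous_heightOn ((isClopen_discrete {true}).preimage (continuous_apply n))))
  obtain ⟨c, s, rfl⟩ := z.exists_eq_mk
  obtain ⟨d, t, rfl⟩ := w.exists_eq_mk
  simp only [height_mk, Prod.mk.injEq, funext_iff] at h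
  obtain ⟨rfl, hbits⟩ := h
  rcases eq_or_ne s 0 with rfl | hs
  · simp
  refine congrArg (mk · s) (funext fun n => ?_)
  have := hbits n
  cases hc : c n <;> cases hd : d n <;> simp_all [heightOn]


@[simp]
theorem heightOn_mk_pos_iff {U : Set (ℕ → Bool)} {c : ℕ → Bool} {t : I} :
    0 < heightOn U (mk c t) ↔ c ∈ U ∧ 0 < t := by
  by_cases hc : c ∈ U <;> simp [heightOn, hc]

@[simp]
theorem heightOn_fanTop (U : Set (ℕ → Bool)) : heightOn U fanTop = 0 := by
  rw [← mk_zero fun _ => false]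
  exact ite_self 0

theorem isClosedEmbedding_mk (c : ℕ → Bool) : IsClosedEmbedding (mk c) :=
  (continuous_mk c).isClosedEmbedding (mk_injective c)

theorem subset_range_mk {T : Set CantorFan} (hT : IsPreconnected T) (hv : fanTop ∉ T)
    {c : ℕ → Bool} {t : I} (ht : mk c t ∈ T) : T ⊆ range (mk c) := by
  have hpos : ∀ {d u}, mk d u ∈ T → 0 < u := fun h =>
    pos_iff_ne_zero.2 fun hu => hv (by simpa [hu] using h)
  intro z hu
  obtain ⟨d, u, rfl⟩ := exists_eq_mk z
  by_contra hdc
  obtain ⟨U, hU, hcU, hdU⟩ := exists_isClopen_of_totally_separated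
    (show c ≠ d by rintro rfl; exact hdc ⟨u, rfl⟩)
  have hopen {V : Set (ℕ → Bool)} (hV : IsClopen V) : IsOpen (heightOn V ⁻¹' Ioi 0) :=
    isOpen_Ioi.preimage (continuous_heightOn hV)
  obtain ⟨z, -, hzU, hzU'⟩ := hT _ _ (hopen hU) (hopen hU.compl)
    (fun z hz => by
      obtain ⟨e, r, rfl⟩ := exists_eq_mk z
      by_cases he : e ∈ U <;> simp [he, hpos hz])
    ⟨_, ht, by simp [hcU, hpos ht]⟩ ⟨_, hu, by simp [hdU, hpos hu]⟩
  obtain ⟨e, r, rfl⟩ := exists_eq_mk z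
  simp only [mem_preimage, mem_Ioi, heightOn_mk_pos_iff, mem_compl_iff] at hzU hzU'
  exact hzU'.1 hzU.1

theorem exists_eq_image_Icc {T : Set CantorFan} (hTc : IsCompact T) (hT : IsConnected T)
    (hTn : T.Nontrivial) (hv : fanTop ∉ T) :
    ∃ c α β, α < β ∧ T = mk c '' Icc α β := by
  obtain ⟨z, hz⟩ := hT.nonempty
  obtain ⟨c, t, rfl⟩ := exists_eq_mk z
  have hTS : mk c '' (mk c ⁻¹' T) = T :=
    image_preimage_eq_of_subset (subset_range_mk hT.isPreconnected hv hz)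
  set S := mk c ⁻¹' T
  have hSc : IsCompact S := (isClosedEmbedding_mk c).isCompact_preimage hTc
  have hS : IsPreconnected S :=
    (isClosedEmbedding_mk c).isInducing.isPreconnected_image.1 (hTS ▸ hT.isPreconnected)
  obtain ⟨α, hα, hαS⟩ := hSc.exists_isLeast ⟨t, hz⟩
  obtain ⟨β, hβ, hβS⟩ := hSc.exists_isGreatest ⟨t, hz⟩
  have hSI : S = Icc α β :=
    (subset_antisymm (fun x hx => ⟨hαS hx, hβS hx⟩) (hS.Icc_subset hα hβ))
  refine ⟨c, α, β, lt_of_le_of_ne (hαS hβ) fun hαβ => ?_, by rw [← hSI, hTS]⟩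
  rw [← hTS, hSI, ← hαβ, Icc_self, image_singleton] at hTn
  exact hTn.not_subsingleton subsingleton_singleton

theorem exists_arc (c : ℕ → Bool) {α β : I} (hαβ : α < β) :
    ∃ h : I → CantorFan, IsEmbedding h ∧ range h = mk c '' Icc α β ∧
      h 0 = mk c α ∧ h 1 = mk c β := by
  let φ : I → I := inclusion (Icc_subset_Icc α.2.1 β.2.2) ∘ (iccHomeoI (α : ℝ) (β : ℝ) hαβ).symm
  have hφ (r : I) : (φ r : ℝ) = ((β : ℝ) - α) * r + α :=
    iccHomeoI_symm_apply_coe (α : ℝ) β hαβ r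
  refine ⟨mk c ∘ φ, (isClosedEmbedding_mk c).isEmbedding.comp
    ((IsEmbedding.inclusion _).comp (iccHomeoI (α : ℝ) (β : ℝ) hαβ).symm.isEmbedding), ?_,
    congrArg (mk c) (Subtype.ext (by simp [hφ])), congrArg (mk c) (Subtype.ext (by simp [hφ]))⟩
  rw [range_comp, range_comp, Homeomorph.range_coe, image_univ, range_inclusion]
  rfl

theorem not_isEndpoint_mk {T : Set CantorFan} {c : ℕ → Bool} {α β w : I}
    (hT : mk c '' Icc α β ⊆ T) (hαw : α < w) (hwβ : w < β) : ¬ IsEndpoint T (mk c w) := by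
  rintro ⟨-, hE⟩
  obtain ⟨h, hh, hrange, h0, h1⟩ := exists_arc c (hαw.trans hwβ)
  rcases hE h hh (hrange ▸ hT) (hrange ▸ mem_image_of_mem _ ⟨hαw.le, hwβ.le⟩) with h' | h'
  · exact hαw.ne' (mk_injective c (h'.trans h0))
  · exact hwβ.ne (mk_injective c (h'.trans h1))

theorem _root_.IsSmoothFan.fanTop_mem {X : Set CantorFan} (hX : IsSmoothFan X) : fanTop ∈ X := by
  obtain ⟨hXn, hXc, hXconn, hXI⟩ := hX
  by_contra hv
  obtain ⟨c, α, β, hαβ, rfl⟩ := exists_eq_image_Icc hXc hXconn hXn hv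
  obtain ⟨h, hh, hrange, -⟩ := exists_arc c hαβ
  exact hXI ⟨(Homeomorph.setCongr hrange.symm).trans hh.toHomeomorph.symm⟩

theorem _root_.IsLelekFan.fanTop_mem {L : Set CantorFan} (hL : IsLelekFan L) : fanTop ∈ L := by
  obtain ⟨hLn, hLc, hLconn, hLe⟩ := hL
  by_contra hv
  obtain ⟨c, α, β, hαβ, rfl⟩ := exists_eq_image_Icc hLc hLconn hLn hv
  obtain ⟨w, hαw, hwβ⟩ := exists_between hαβ
  obtain ⟨e, he, heE⟩ := mem_closure_iff.1 (hLe (mem_image_of_mem _ ⟨hαw.le, hwβ.le⟩))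
    (height ⁻¹' Ioo α β) (isOpen_Ioo.preimage continuous_height) (by simpa using ⟨hαw, hwβ⟩)
  obtain ⟨u, -, rfl⟩ := heE.1
  simp only [mem_preimage, height_mk, mem_Ioo] at he
  exact not_isEndpoint_mk subset_rfl he.1 he.2 heE

theorem mk_mem_of_le {T : Set CantorFan} (hT : IsPreconnected T) (hTc : IsClosed T)
    (hv : fanTop ∈ T) {c : ℕ → Bool} {s t : I} (ht : mk c t ∈ T) (hst : s ≤ t) : mk c s ∈ T := by
  by_contra hs
  have hs0 : 0 < s := pos_iff_ne_zero.2 fun h => hs (by simpa [h])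
  have hA : IsClosed {d | mk d s ∈ T} := hTc.preimage (by fun_prop)
  obtain ⟨U, ⟨hcU, hU⟩, hUA⟩ := (nhds_basis_clopen c).mem_iff.1 (hA.isOpen_compl.mem_nhds hs)
  have hsub : Icc 0 t ⊆ heightOn U '' T :=
    (hT.image _ (continuous_heightOn hU).continuousOn).Icc_subset
      ⟨_, hv, heightOn_fanTop U⟩ ⟨_, ht, heightOn_mk_of_mem hcU t⟩
  obtain ⟨z, hz, hzs⟩ := hsub ⟨hs0.le, hst⟩
  obtain ⟨d, u, rfl⟩ := exists_eq_mk z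
  obtain ⟨hdU, -⟩ := heightOn_mk_pos_iff.1 (hzs ▸ hs0)
  rw [heightOn_mk_of_mem hdU] at hzs
  exact hUA hdU (hzs ▸ hz)

theorem _root_.IsLelekFan.mk_mem_of_le {L : Set CantorFan} (hL : IsLelekFan L) {c : ℕ → Bool}
    {s t : I} (ht : mk c t ∈ L) (hst : s ≤ t) : mk c s ∈ L :=
  CantorFan.mk_mem_of_le hL.2.2.1.isPreconnected hL.2.1.isClosed hL.fanTop_mem ht hst

theorem _root_.IsSmoothFan.mk_mem_of_le {X : Set CantorFan} (hX : IsSmoothFan X) {c : ℕ → Bool}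
    {s t : I} (ht : mk c t ∈ X) (hst : s ≤ t) : mk c s ∈ X :=
  CantorFan.mk_mem_of_le hX.2.2.1.isPreconnected hX.2.1.isClosed hX.fanTop_mem ht hst

theorem _root_.IsLelekFan.preperfect_tallLegs {L : Set CantorFan} (hL : IsLelekFan L) (δ : I) :
    Preperfect {c | ∃ t, δ < t ∧ mk c t ∈ L} := by
  rintro c ⟨t, hδt, ht⟩
  rw [accPt_iff_nhds]
  intro U hU
  obtain ⟨V, ⟨hcV, hV⟩, hVU⟩ := (nhds_basis_clopen c).mem_iff.1 hU
  obtain ⟨u, hδu, hut⟩ := exists_between hδt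
  obtain ⟨e, he, heE⟩ := mem_closure_iff.1 (hL.2.2.2 (hL.mk_mem_of_le ht hut.le))
    (heightOn V ⁻¹' Ioo δ t) (isOpen_Ioo.preimage (continuous_heightOn hV))
    (by simpa [heightOn_mk_of_mem hcV] using ⟨hδu, hut⟩)
  obtain ⟨b, v, rfl⟩ := exists_eq_mk e
  obtain ⟨hbV, -⟩ := heightOn_mk_pos_iff.1 ((zero_le : 0 ≤ δ).trans_lt he.1)
  rw [mem_preimage, heightOn_mk_of_mem hbV] at he
  refine ⟨b, ⟨hVU hbV, v, he.1, heE.1⟩, ?_⟩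
  rintro rfl
  exact not_isEndpoint_mk (image_subset_iff.2 fun s hs => hL.mk_mem_of_le ht hs.2)
    ((zero_le : 0 ≤ δ).trans_lt he.1) he.2 heE

theorem _root_.IsLelekFan.exists_perfect_level {L : Set CantorFan} (hL : IsLelekFan L) :
    ∃ δ : I, 0 < δ ∧ ∃ P : Set (ℕ → Bool), Perfect P ∧ P.Nonempty ∧ ∀ c ∈ P, mk c δ ∈ L := by
  obtain ⟨z, hz, hzv⟩ := hL.1.exists_ne fanTop
  obtain ⟨c, t, rfl⟩ := exists_eq_mk z
  obtain ⟨δ, hδ, hδt⟩ := exists_between (pos_iff_ne_zero.2 (mt mk_eq_fanTop.2 hzv))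
  refine ⟨δ, hδ, _, (hL.preperfect_tallLegs δ).perfect_closure, ⟨c, subset_closure ⟨t, hδt, hz⟩⟩,
    closure_minimal (fun d ⟨u, hδu, hu⟩ => hL.mk_mem_of_le hu hδu.le) ?_⟩
  exact hL.2.1.isClosed.preimage (by fun_prop)

noncomputable def segmentMap (δ : I) (φ : (ℕ → Bool) → (ℕ → Bool) × I) : CantorFan → CantorFan :=
  lift (fun c t => mk (φ c).1 (min (projIcc 0 1 zero_le_one (t / δ)) (φ c).2)) fun c d => by
    simp

variable {δ : I} {φ : (ℕ → Bool) → (ℕ → Bool) × I}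

theorem segmentMap_mk (c : ℕ → Bool) (t : I) :
    segmentMap δ φ (mk c t) = mk (φ c).1 (min (projIcc 0 1 zero_le_one (t / δ)) (φ c).2) := rfl

theorem continuous_segmentMap (hφ : Continuous φ) : Continuous (segmentMap δ φ) :=
  continuous_lift _ (by fun_prop)

@[simp]
theorem segmentMap_fanTop : segmentMap δ φ fanTop = fanTop := by
  rw [← mk_zero fun _ => false, segmentMap_mk]
  simp

theorem segmentMap_mk_self (hδ : 0 < δ) (c : ℕ → Bool) :
    segmentMap δ φ (mk c δ) = mk (φ c).1 (φ c).2 := by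
  rw [segmentMap_mk, div_self (ne_of_gt hδ), projIcc_right]
  exact congrArg _ (min_eq_right (le_one _))

theorem segmentMap_mem_fanSegment {x y : CantorFan} (h : x ∈ fanSegment y) :
    segmentMap δ φ x ∈ fanSegment (segmentMap δ φ y) := by
  obtain ⟨c, t, rfl, s, hst, rfl⟩ := h
  exact ⟨_, _, rfl, _, min_le_min_right _ (monotone_projIcc _
    (div_le_div_of_nonneg_right hst δ.2.1)), rfl⟩

theorem segmentMap_mem {T : Set CantorFan}
    (hT : ∀ {c : ℕ → Bool} {s t : I}, mk c t ∈ T → s ≤ t → mk c s ∈ T)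
    (hφT : ∀ c, mk (φ c).1 (φ c).2 ∈ T) (z : CantorFan) : segmentMap δ φ z ∈ T := by
  obtain ⟨c, t, rfl⟩ := exists_eq_mk z
  exact hT (hφT c) (min_le_right _ _)

end CantorFan

open CantorFan in
/-- Every smooth fan is a continuous image of the Lelek fan, via a map that is
monotone on segments. -/
theorem lelekFan_projectively_universal (L X : Set CantorFan)
    (hL : IsLelekFan L) (hX : IsSmoothFan X) :
    ∃ f : ↥L → ↥X, Continuous f ∧ Function.Surjective f ∧ MonotoneOnSegments L X f := by
  obtain ⟨δ, hδ, P, hP, hPne, hPL⟩ := hL.exists_perfect_level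
  let M := {p : (ℕ → Bool) × I | mk p.1 p.2 ∈ X}
  have : CompactSpace M :=
    isCompact_iff_compactSpace.1 (hX.2.1.isClosed.preimage continuous_mk_uncurry).isCompact
  have : Nonempty M := by
    obtain ⟨x, hx⟩ := hX.1.nonempty
    obtain ⟨a, s, rfl⟩ := exists_eq_mk x
    exact ⟨⟨(a, s), hx⟩⟩
  obtain ⟨φ, hφ, hφP⟩ := hP.exists_continuous_surjOn hPne M
  let ψ : (ℕ → Bool) → (ℕ → Bool) × I := fun c => φ c
  have hmem : ∀ z, segmentMap δ ψ z ∈ X := segmentMap_mem hX.mk_mem_of_le fun c => (φ c).2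
  refine ⟨fun z => ⟨segmentMap δ ψ z, hmem z⟩,
    ((continuous_segmentMap (by fun_prop)).comp continuous_subtype_val).subtype_mk _, ?_,
    fun _ => segmentMap_fanTop, fun _ _ => segmentMap_mem_fanSegment⟩
  rintro ⟨x, hx⟩
  obtain ⟨a, s, rfl⟩ := exists_eq_mk x
  obtain ⟨c, hc, hφc⟩ := hφP (mem_univ ⟨(a, s), hx⟩)
  exact ⟨⟨mk c δ, hPL c hc⟩, Subtype.ext ((segmentMap_mk_self hδ c).trans (by simp [ψ, hφc]))⟩
end

section
/- Let T be a finite fan with root r and let s be a binary relation on T. Then the following are equivalent: (i) there exist a finite fan S and epimorphisms p₁, p₂ : S → T such that s = {(p₁(x), p₂(x)) : x ∈ S}; (ii) s is surjective, s(r,r) holds, and for every pair (x,y) with s(x,y), the pair (x,y) is s-connected to (r,r). -/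
/-- A binary relation `s` on a tree is surjective if every point has an `s`-successor
and an `s`-predecessor. -/
def RelSurjective (T : FiniteRootedTree) (s : T.carrier → T.carrier → Prop) : Prop :=
  ∀ t : T.carrier, (∃ u, s t u) ∧ (∃ w, s w t)

/-- `SAdjacent T s p₀ p₁` : the pair `p₁` is `s`-adjacent to the pair `p₀`. -/
def SAdjacent (T : FiniteRootedTree) (s : T.carrier → T.carrier → Prop)
    (p₀ p₁ : T.carrier × T.carrier) : Prop :=
  T.R p₀.1 p₁.1 ∧ T.R p₀.2 p₁.2 ∧ s p₀.1 p₀.2 ∧ s p₁.1 p₁.2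

/-- `SConnected T s a b` : the pair `b` is `s`-connected to the pair `a`, i.e. there is a
finite sequence from `a` to `b` each term of which is `s`-adjacent to the previous one. -/
def SConnected (T : FiniteRootedTree) (s : T.carrier → T.carrier → Prop)
    (a b : T.carrier × T.carrier) : Prop :=
  Relation.ReflTransGen (SAdjacent T s) a b

/-! Necessity: an epimorphism is monotone, hence fixes the root, and pushing a chain of covers
`⊥ ⋖ ⋯ ⋖ z` of `S` through `(p₁, p₂)` gives an `s`-adjacent sequence from `(⊥, ⊥)` to
`(p₁ z, p₂ z)`.

Sufficiency: every pair in `s` is the end of an `s`-walk from `(⊥, ⊥)`, and since a walk may stay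
put, all of them can be taken of one common length `n + 1`. Let `S` be the fan with one branch of
length `n + 1` per such walk, the `k`-th node of a branch sitting over the `k`-th pair of its walk.
Both coordinate maps are epimorphisms: a cover `t ⋖ t'` of `T` is lifted at a step where the
coordinate enters `t'`, and the coordinate before that step is `t` because lower covers in a tree
are unique. -/

open Relation Filter

namespace FiniteRootedTree

variable {T : FiniteRootedTree}

theorem R_iff_wcovBy {a b : T.carrier} : T.R a b ↔ a ⩿ b :=
  wcovBy_iff_eq_or_covBy.symm

theorem eq_of_covBy_of_covBy {a b c : T.carrier} (hac : a ⋖ c) (hbc : b ⋖ c) : a = b := by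
  rcases (T.chains c).total hac.le hbc.le with hab | hba
  · exact ((hac.eq_or_eq hab hbc.le).resolve_right hbc.ne).symm
  · exact (hbc.eq_or_eq hba hac.le).resolve_right hac.ne

theorem exists_covBy_step {f : ℕ → T.carrier} {m : ℕ} (h0 : f 0 = ⊥)
    (hstep : ∀ j < m, T.R (f j) (f (j + 1))) {t t' : T.carrier} (ht : t ⋖ t') (hm : f m = t') :
    ∃ j < m, f j = t ∧ f (j + 1) = t' := by
  induction m with
  | zero => exact absurd (h0.symm.trans hm ▸ ht.lt) not_lt_bot
  | succ m ih =>
    by_cases hfm : f m = t'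
    · obtain ⟨j, hj, hjt⟩ := ih (fun j hj => hstep j (by omega)) hfm
      exact ⟨j, by omega, hjt⟩
    · have hcov : f m ⋖ t' := (hm ▸ hstep m m.lt_succ_self).resolve_left hfm
      exact ⟨m, m.lt_succ_self, eq_of_covBy_of_covBy hcov ht, hm⟩

theorem exists_isMax_eq_Iic {c : Set T.carrier} (hc : IsMaxChain (· ≤ ·) c) :
    ∃ m, IsMax m ∧ c = Set.Iic m := by
  obtain ⟨m, hm⟩ := c.toFinite.exists_maximal ⟨⊥, hc.bot_mem⟩
  have hc_le : c ⊆ Set.Iic m := fun x hx =>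
    (hc.isChain.total hx hm.prop).elim id fun hmx => hm.le_of_ge hx hmx
  have hc_eq {x} (hmx : m ≤ x) : c = Set.Iic x :=
    hc.2 (T.chains x) (hc_le.trans (Set.Iic_subset_Iic.2 hmx))
  refine ⟨m, fun x hmx => hc_le ?_, hc_eq le_rfl⟩
  rw [hc_eq hmx]
  exact Set.mem_Iic.2 le_rfl

end FiniteRootedTree

section Epimorphisms

variable {S T : FiniteRootedTree}

theorem IsTreeEpi.monotone {φ : S.carrier → T.carrier} (hφ : IsTreeEpi S T φ) : Monotone φ := by
  classical
  let := Fintype.toLocallyFiniteOrder (α := S.carrier)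
  exact (monotone_iff_forall_wcovBy φ).2 fun a b hab =>
    (FiniteRootedTree.R_iff_wcovBy.1 <| hφ.2.1 a b <| FiniteRootedTree.R_iff_wcovBy.2 hab).le

theorem IsTreeEpi.map_bot {φ : S.carrier → T.carrier} (hφ : IsTreeEpi S T φ) : φ ⊥ = ⊥ := by
  obtain ⟨z, hz⟩ := hφ.1 ⊥
  exact le_bot_iff.1 (hz ▸ hφ.monotone bot_le)

theorem sConnected_bot_of_isTreeEpi {s : T.carrier → T.carrier → Prop}
    {p₁ p₂ : S.carrier → T.carrier} (h₁ : IsTreeEpi S T p₁) (h₂ : IsTreeEpi S T p₂)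
    (hs : ∀ z, s (p₁ z) (p₂ z)) (z : S.carrier) : SConnected T s (⊥, ⊥) (p₁ z, p₂ z) := by
  classical
  let := Fintype.toLocallyFiniteOrder (α := S.carrier)
  have hpath : TransGen (SAdjacent T s) (p₁ ⊥, p₂ ⊥) (p₁ z, p₂ z) :=
    TransGen.lift (p := SAdjacent T s) (fun z => (p₁ z, p₂ z))
      (fun a b hab => ⟨h₁.2.1 a b (FiniteRootedTree.R_iff_wcovBy.2 hab),
        h₂.2.1 a b (FiniteRootedTree.R_iff_wcovBy.2 hab), hs a, hs b⟩)
      ⊥ z (le_iff_transGen_wcovBy.1 bot_le)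
  rw [h₁.map_bot, h₂.map_bot] at hpath
  exact hpath.to_reflTransGen

theorem relSurjective_and_sConnected_of_isTreeEpi {s : T.carrier → T.carrier → Prop}
    {p₁ p₂ : S.carrier → T.carrier} (h₁ : IsTreeEpi S T p₁) (h₂ : IsTreeEpi S T p₂)
    (hs : ∀ x y, s x y ↔ ∃ z, p₁ z = x ∧ p₂ z = y) :
    RelSurjective T s ∧ s ⊥ ⊥ ∧ ∀ x y, s x y → SConnected T s (⊥, ⊥) (x, y) := by
  have hsz (z : S.carrier) : s (p₁ z) (p₂ z) := (hs _ _).2 ⟨z, rfl, rfl⟩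
  refine ⟨fun t => ⟨?_, ?_⟩, ?_, ?_⟩
  · obtain ⟨z, rfl⟩ := h₁.1 t
    exact ⟨_, hsz z⟩
  · obtain ⟨z, rfl⟩ := h₂.1 t
    exact ⟨_, hsz z⟩
  · simpa only [h₁.map_bot, h₂.map_bot] using hsz ⊥
  · rintro x y hxy
    obtain ⟨z, rfl, rfl⟩ := (hs x y).1 hxy
    exact sConnected_bot_of_isTreeEpi h₁ h₂ hsz z

end Epimorphisms

/-- The root with one chain `⟨i, 0⟩ < ⋯ < ⟨i, n⟩` for each `i : ι`; the `Sigma` order makes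
distinct branches incomparable. -/
abbrev BranchFan (ι : Type) (n : ℕ) : Type := WithBot (Σ _ : ι, Fin (n + 1))

namespace BranchFan

variable {ι : Type} {n : ℕ}

def node (i : ι) : Fin (n + 2) → BranchFan ι n :=
  Fin.cases ⊥ fun k => ((⟨i, k⟩ : Σ _ : ι, Fin (n + 1)) : BranchFan ι n)

def top (i : ι) : BranchFan ι n := ((⟨i, Fin.last n⟩ : Σ _ : ι, Fin (n + 1)) : BranchFan ι n)

@[simp] theorem node_succ (i : ι) (k : Fin (n + 1)) :
    node i k.succ = ((⟨i, k⟩ : Σ _ : ι, Fin (n + 1)) : BranchFan ι n) := rfl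

theorem coe_le_coe_iff {i j : ι} {k l : Fin (n + 1)} :
    ((⟨i, k⟩ : Σ _ : ι, Fin (n + 1)) : BranchFan ι n) ≤ ((⟨j, l⟩ : Σ _ : ι, Fin (n + 1))) ↔
      i = j ∧ k ≤ l := by
  rw [WithBot.coe_le_coe]
  constructor
  · intro h
    obtain ⟨hij, hle⟩ := Sigma.le_def.1 h
    dsimp only at hij
    subst hij
    exact ⟨rfl, hle⟩
  · rintro ⟨rfl, h⟩
    exact Sigma.mk_le_mk_iff.2 h

theorem node_strictMono (i : ι) : StrictMono (node (n := n) i) := by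
  refine Fin.strictMono_iff_lt_succ.2 fun j => ?_
  cases j using Fin.cases with
  | zero => exact WithBot.bot_lt_coe _
  | succ k =>
    rw [← Fin.succ_castSucc, node_succ, node_succ, WithBot.coe_lt_coe, Sigma.lt_def]
    exact ⟨rfl, Fin.castSucc_lt_succ⟩

theorem range_node (i : ι) : Set.range (node (n := n) i) = Set.Iic (top i) := by
  ext z
  induction z using WithBot.recBotCoe with
  | bot => exact ⟨fun _ => Set.mem_Iic.2 bot_le, fun _ => ⟨0, rfl⟩⟩
  | coe x =>
    obtain ⟨j, k⟩ := x
    rw [Set.mem_Iic, top, coe_le_coe_iff]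
    constructor
    · rintro ⟨m, hm⟩
      cases m using Fin.cases with
      | zero => exact absurd hm.symm (WithBot.coe_ne_bot)
      | succ m =>
        obtain ⟨rfl, -⟩ := Sigma.mk.inj_iff.1 (WithBot.coe_injective hm)
        exact ⟨rfl, Fin.le_last k⟩
    · rintro ⟨rfl, -⟩
      exact ⟨k.succ, rfl⟩

theorem le_top_of_coe_le {i : ι} {k : Fin (n + 1)} {z : BranchFan ι n}
    (h : ((⟨i, k⟩ : Σ _ : ι, Fin (n + 1)) : BranchFan ι n) ≤ z) : z ≤ top i := by
  induction z using WithBot.recBotCoe with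
  | bot => exact absurd (le_bot_iff.1 h) WithBot.coe_ne_bot
  | coe x =>
    obtain ⟨j, l⟩ := x
    obtain ⟨rfl, -⟩ := coe_le_coe_iff.1 h
    exact coe_le_coe_iff.2 ⟨rfl, Fin.le_last l⟩

theorem exists_le_top [Nonempty ι] (z : BranchFan ι n) : ∃ i, z ≤ top i := by
  induction z using WithBot.recBotCoe with
  | bot => exact ⟨Classical.arbitrary ι, bot_le⟩
  | coe x => exact ⟨x.1, le_top_of_coe_le le_rfl⟩

theorem isChain_Iic_top (i : ι) : IsChain (· ≤ ·) (Set.Iic (top (n := n) i)) :=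
  range_node i ▸ (node_strictMono i).monotone.isChain_range

theorem isChain_Iic (z : BranchFan ι n) : IsChain (· ≤ ·) (Set.Iic z) := by
  induction z using WithBot.recBotCoe with
  | bot => exact Set.Iic_bot (α := BranchFan ι n) ▸ Set.subsingleton_singleton.isChain
  | coe x => exact (isChain_Iic_top x.1).mono (Set.Iic_subset_Iic.2 (le_top_of_coe_le le_rfl))

theorem node_covBy_node_iff (i : ι) {a b : Fin (n + 2)} : node i a ⋖ node i b ↔ a ⋖ b :=
  Set.OrdConnected.apply_covBy_apply_iff (OrderEmbedding.ofStrictMono _ (node_strictMono i))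
    (range_node i ▸ Set.ordConnected_Iic)

theorem node_covBy_node (i : ι) (j : Fin (n + 1)) : node i j.castSucc ⋖ node i j.succ :=
  (node_covBy_node_iff i).2 (Fin.covBy_iff.2 (by simp))

theorem exists_node_of_covBy {z z' : BranchFan ι n} (h : z ⋖ z') :
    ∃ (i : ι) (j : Fin (n + 1)), z = node i j.castSucc ∧ z' = node i j.succ := by
  induction z' using WithBot.recBotCoe with
  | bot => exact absurd h.lt not_lt_bot
  | coe x =>
    have hz' := le_top_of_coe_le (le_refl (x : BranchFan ι n))
    obtain ⟨a, rfl⟩ : z ∈ Set.range (node x.1) := range_node x.1 ▸ h.le.trans hz'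
    obtain ⟨b, hb⟩ : (x : BranchFan ι n) ∈ Set.range (node x.1) := range_node x.1 ▸ hz'
    rw [← hb, node_covBy_node_iff, Fin.covBy_iff, Nat.covBy_iff_add_one_eq] at h
    exact ⟨x.1, ⟨a, by omega⟩, rfl, by rw [← hb]; congr 1; ext; simp [h]⟩

end BranchFan

abbrev FiniteRootedTree.branchFan (ι : Type) [Fintype ι] (n : ℕ) : FiniteRootedTree where
  carrier := BranchFan ι n
  chains := BranchFan.isChain_Iic

theorem isFan_branchFan (ι : Type) [Fintype ι] [Nonempty ι] (n : ℕ) :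
    IsFan (FiniteRootedTree.branchFan ι n) := by
  refine ⟨fun x y p hxy hyx hpx hpy hRx hRy => ?_, fun b₁ b₂ h₁ h₂ => ?_⟩
  · induction p using WithBot.recBotCoe with
    | bot => rfl
    | coe p =>
      have hx := BranchFan.le_top_of_coe_le ((hRx.resolve_left hpx).le)
      have hy := BranchFan.le_top_of_coe_le ((hRy.resolve_left hpy).le)
      exact ((BranchFan.isChain_Iic_top p.1).total hx hy).elim (absurd · hxy) (absurd · hyx)
  · have hcard {c : Set (BranchFan ι n)} (hc : IsMaxChain (· ≤ ·) c) : c.ncard = n + 2 := by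
      obtain ⟨m, hm, rfl⟩ := FiniteRootedTree.exists_isMax_eq_Iic (T := .branchFan ι n) hc
      obtain ⟨i, hi⟩ := BranchFan.exists_le_top m
      rw [hm.eq_of_le hi, ← BranchFan.range_node, Set.ncard_range_of_injective
        (BranchFan.node_strictMono i).injective, Nat.card_fin]
    exact (hcard h₁).trans (hcard h₂).symm

section Walks

variable {T : FiniteRootedTree} {s : T.carrier → T.carrier → Prop}

theorem sAdjacent_self {p : T.carrier × T.carrier} (hp : s p.1 p.2) : SAdjacent T s p p :=
  ⟨Or.inl rfl, Or.inl rfl, hp, hp⟩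

variable (T s) in
def IsSWalk (n : ℕ) (π : ℕ → T.carrier × T.carrier) : Prop :=
  π 0 = (⊥, ⊥) ∧ (∀ i, SAdjacent T s (π i) (π (i + 1))) ∧ ∀ i, n ≤ i → π i = π n

theorem IsSWalk.mono {k n : ℕ} {π : ℕ → T.carrier × T.carrier} (hπ : IsSWalk T s k π)
    (hkn : k ≤ n) : IsSWalk T s n π :=
  ⟨hπ.1, hπ.2.1, fun i hi => (hπ.2.2 i (hkn.trans hi)).trans (hπ.2.2 n hkn).symm⟩

theorem exists_isSWalk_of_sConnected (hbb : s ⊥ ⊥) {q : T.carrier × T.carrier}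
    (hq : SConnected T s (⊥, ⊥) q) : ∃ k π, IsSWalk T s k π ∧ π k = q := by
  induction hq with
  | refl => exact ⟨0, fun _ => (⊥, ⊥), ⟨rfl, fun _ => sAdjacent_self hbb, fun _ _ => rfl⟩, rfl⟩
  | @tail b c _ hbc ih =>
    obtain ⟨k, π, hπ, hπk⟩ := ih
    refine ⟨k + 1, fun i => if i ≤ k then π i else c, ⟨by simp [hπ.1], fun i => ?_,
      fun i hi => by simp [show ¬i ≤ k by omega]⟩, by simp⟩
    rcases lt_trichotomy i k with hi | rfl | hi
    · simpa [hi.le, Nat.succ_le_of_lt hi] using hπ.2.1 i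
    · simpa [hπk] using hbc
    · simpa [show ¬i ≤ k by omega, show ¬i + 1 ≤ k by omega] using sAdjacent_self hbc.2.2.2

theorem exists_isSWalk_uniform (hbb : s ⊥ ⊥)
    (hconn : ∀ x y, s x y → SConnected T s (⊥, ⊥) (x, y)) :
    ∃ n, ∀ q : T.carrier × T.carrier, s q.1 q.2 → ∃ π, IsSWalk T s (n + 1) π ∧ π (n + 1) = q := by
  have hev (q : T.carrier × T.carrier) :
      ∀ᶠ n in atTop, s q.1 q.2 → ∃ π, IsSWalk T s n π ∧ π n = q := by
    by_cases hq : s q.1 q.2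
    · obtain ⟨k, π, hπ, hπk⟩ := exists_isSWalk_of_sConnected hbb (hconn q.1 q.2 hq)
      filter_upwards [eventually_ge_atTop k] with n hn
      exact fun _ => ⟨π, hπ.mono hn, (hπ.2.2 n hn).trans hπk⟩
    · exact Eventually.of_forall fun _ h => absurd h hq
  obtain ⟨N, hN⟩ := eventually_atTop.1 (eventually_all.2 hev)
  exact ⟨N, hN (N + 1) N.le_succ⟩

variable (T s) in
abbrev SWalk (n : ℕ) : Type := {π : ℕ → T.carrier × T.carrier // IsSWalk T s (n + 1) π}

instance (n : ℕ) : Finite (SWalk T s n) := by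
  refine Finite.of_injective (fun π : SWalk T s n => fun i : Fin (n + 2) => π.1 i) fun π ρ h => ?_
  ext1
  funext i
  by_cases hi : i ≤ n + 1
  · exact congrFun h ⟨i, by omega⟩
  · rw [π.2.2.2 i (by omega), ρ.2.2.2 i (by omega)]
    exact congrFun h (Fin.last _)

end Walks

namespace SWalk

open BranchFan

variable {T : FiniteRootedTree} {s : T.carrier → T.carrier → Prop} {n : ℕ}

noncomputable instance : Fintype (SWalk T s n) := Fintype.ofFinite _

def point : BranchFan (SWalk T s n) n → T.carrier × T.carrier :=
  WithBot.recBotCoe (⊥, ⊥) fun x => x.1.1 (x.2 + 1)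

theorem point_node (π : SWalk T s n) (j : Fin (n + 2)) : point (node π j) = π.1 j := by
  cases j using Fin.cases with
  | zero => exact π.2.1.symm
  | succ k => rfl

theorem rel_point (hbb : s ⊥ ⊥) (z : BranchFan (SWalk T s n) n) :
    s (point z).1 (point z).2 := by
  induction z using WithBot.recBotCoe with
  | bot => exact hbb
  | coe x => exact (x.1.2.2.1 x.2).2.2.2

theorem exists_point_eq {q : T.carrier × T.carrier}
    (hreach : ∃ π, IsSWalk T s (n + 1) π ∧ π (n + 1) = q) :
    ∃ z : BranchFan (SWalk T s n) n, point z = q := by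
  obtain ⟨π, hπ, rfl⟩ := hreach
  exact ⟨node ⟨π, hπ⟩ (Fin.last (n + 1)), point_node _ _⟩

theorem sAdjacent_point_of_covBy {z z' : BranchFan (SWalk T s n) n} (h : z ⋖ z') :
    SAdjacent T s (point z) (point z') := by
  obtain ⟨π, j, rfl, rfl⟩ := exists_node_of_covBy h
  rw [point_node, point_node]
  exact π.2.2.1 j

theorem isTreeEpi_comp_point (pr : T.carrier × T.carrier → T.carrier)
    (hpr : ∀ p q, SAdjacent T s p q → T.R (pr p) (pr q)) (hbot : pr (⊥, ⊥) = ⊥)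
    (hsurj : ∀ t, ∃ q : T.carrier × T.carrier, s q.1 q.2 ∧ pr q = t)
    (hreach : ∀ q : T.carrier × T.carrier, s q.1 q.2 →
      ∃ π, IsSWalk T s (n + 1) π ∧ π (n + 1) = q) :
    IsTreeEpi (.branchFan (SWalk T s n) n) T (pr ∘ point) := by
  have hsurj' : Function.Surjective (pr ∘ point (T := T) (s := s) (n := n)) := fun t => by
    obtain ⟨q, hq, rfl⟩ := hsurj t
    obtain ⟨z, hz⟩ := exists_point_eq (hreach q hq)
    exact ⟨z, by simp [hz]⟩
  refine ⟨hsurj', fun z z' h => ?_, fun t t' h => ?_⟩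
  · rcases h with rfl | h
    · exact Or.inl rfl
    · exact hpr _ _ (sAdjacent_point_of_covBy h)
  rcases h with rfl | ht
  · obtain ⟨z, hz⟩ := hsurj' t
    exact ⟨z, z, hz, hz, Or.inl rfl⟩
  obtain ⟨q, hq, rfl⟩ := hsurj t'
  obtain ⟨π, hπ, hπq⟩ := hreach q hq
  obtain ⟨j, hj, hjt, hjt'⟩ := FiniteRootedTree.exists_covBy_step (f := fun j => pr (π j))
    (by simp [hπ.1, hbot]) (fun j _ => hpr _ _ (hπ.2.1 j)) ht (congrArg pr hπq)
  refine ⟨node ⟨π, hπ⟩ (Fin.castSucc ⟨j, hj⟩), node ⟨π, hπ⟩ (Fin.succ ⟨j, hj⟩), ?_, ?_,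
    Or.inr (node_covBy_node _ _)⟩
  · simpa [point_node] using hjt
  · simpa [point_node] using hjt'

end SWalk

theorem fanPlus_characterization_general (T : FiniteRootedTree)
    (s : T.carrier → T.carrier → Prop) :
    (∃ (S : FiniteRootedTree) (p₁ p₂ : S.carrier → T.carrier), IsFan S ∧
        IsTreeEpi S T p₁ ∧ IsTreeEpi S T p₂ ∧
        (∀ x y : T.carrier, s x y ↔ ∃ z : S.carrier, p₁ z = x ∧ p₂ z = y)) ↔
      (RelSurjective T s ∧ s ⊥ ⊥ ∧
        ∀ x y : T.carrier, s x y → SConnected T s (⊥, ⊥) (x, y)) := by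
  refine ⟨fun ⟨_, _, _, _, h₁, h₂, hs⟩ => relSurjective_and_sConnected_of_isTreeEpi h₁ h₂ hs, ?_⟩
  rintro ⟨hsurj, hbb, hconn⟩
  obtain ⟨n, hreach⟩ := exists_isSWalk_uniform hbb hconn
  have : Nonempty (SWalk T s n) := by
    obtain ⟨π, hπ, -⟩ := hreach (⊥, ⊥) hbb
    exact ⟨⟨π, hπ⟩⟩
  refine ⟨.branchFan (SWalk T s n) n, Prod.fst ∘ SWalk.point, Prod.snd ∘ SWalk.point,
    isFan_branchFan _ n,
    SWalk.isTreeEpi_comp_point Prod.fst (fun _ _ h => h.1) rfl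
      (fun t => ⟨(t, _), (hsurj t).1.choose_spec, rfl⟩) hreach,
    SWalk.isTreeEpi_comp_point Prod.snd (fun _ _ h => h.2.1) rfl
      (fun t => ⟨(_, t), (hsurj t).2.choose_spec, rfl⟩) hreach,
    fun x y => ⟨fun hxy => ?_, ?_⟩⟩
  · obtain ⟨z, hz⟩ := SWalk.exists_point_eq (hreach (x, y) hxy)
    exact ⟨z, by simp [hz], by simp [hz]⟩
  · rintro ⟨z, rfl, rfl⟩
    exact SWalk.rel_point hbb z

/-- Characterization of the relations `s` on a finite fan `T` arising as
`{(p₁(x), p₂(x)) : x ∈ S}` for a pair of epimorphisms `p₁, p₂ : S → T` from a fan `S`. -/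
theorem fanPlus_characterization (T : FiniteRootedTree) (hT : IsFan T)
    (s : T.carrier → T.carrier → Prop) :
    (∃ (S : FiniteRootedTree) (p₁ p₂ : S.carrier → T.carrier), IsFan S ∧
        IsTreeEpi S T p₁ ∧ IsTreeEpi S T p₂ ∧
        (∀ x y : T.carrier, s x y ↔ ∃ z : S.carrier, p₁ z = x ∧ p₂ z = y)) ↔
      (RelSurjective T s ∧ s ⊥ ⊥ ∧
        ∀ x y : T.carrier, s x y → SConnected T s (⊥, ⊥) (x, y)) :=
  fanPlus_characterization_general T s
end
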